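/- Let F(x,y,u,v) = (√(u² + v²) + yu - xv)/(2(1 - (x² + y²))) on the slit tangent bundle of the open unit disk, and let λ(x,y,u,v) = 4F(x,y,u,v). Then the vector field Γ = u ∂/∂x + v ∂/∂y + λ(-v ∂/∂u + u ∂/∂v) satisfies Γ(F) = 0; that is, F is constant along the flow of Γ. -/

import Mathlib

/-- The Finsler function for anticlockwise horocycles on the unit disk,
as a function of `(x, y, u, v)`. -/
noncomputable def Fhoro (p : ℝ × ℝ × ℝ × ℝ) : ℝ :=
  (Real.sqrt (p.2.2.1 ^ 2 + p.2.2.2 ^ 2) + p.2.1 * p.2.2.1 - p.1 * p.2.2.2) /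
    (2 * (1 - (p.1 ^ 2 + p.2.1 ^ 2)))

/-- With `λ = 4F`, the spray `Γ = u∂ₓ + v∂_y + λ(-v∂_u + u∂_v)` satisfies `Γ(F) = 0`
on the slit tangent bundle of the open unit disk. -/
theorem F_constant_along_spray
    (x y u v : ℝ) (hdisk : x ^ 2 + y ^ 2 < 1) (huv : (u, v) ≠ (0, 0)) :
    fderiv ℝ Fhoro (x, y, u, v)
      (u, v, -(4 * Fhoro (x, y, u, v)) * v, (4 * Fhoro (x, y, u, v)) * u) = 0 := by
  have hs : u ^ 2 + v ^ 2 ≠ 0 := by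
    intro h
    apply huv
    have hu : u = 0 := by nlinarith [sq_nonneg u, sq_nonneg v]
    have hv : v = 0 := by nlinarith [sq_nonneg u, sq_nonneg v]
    simp [hu, hv]
  have hDne : 2 * (1 - (x ^ 2 + y ^ 2)) ≠ 0 := by nlinarith
  have hX : HasFDerivAt (fun p : ℝ × ℝ × ℝ × ℝ => p.1) _ (x, y, u, v) := hasFDerivAt_fst (𝕜 := ℝ)
  have hY : HasFDerivAt (fun p : ℝ × ℝ × ℝ × ℝ => p.2.1) _ (x, y, u, v) :=
    (hasFDerivAt_fst (𝕜 := ℝ)).comp _ (hasFDerivAt_snd (𝕜 := ℝ))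
  have hU : HasFDerivAt (fun p : ℝ × ℝ × ℝ × ℝ => p.2.2.1) _ (x, y, u, v) :=
    ((hasFDerivAt_fst (𝕜 := ℝ)).comp _ (hasFDerivAt_snd (𝕜 := ℝ))).comp _ (hasFDerivAt_snd (𝕜 := ℝ))
  have hV : HasFDerivAt (fun p : ℝ × ℝ × ℝ × ℝ => p.2.2.2) _ (x, y, u, v) :=
    ((hasFDerivAt_snd (𝕜 := ℝ)).comp _ (hasFDerivAt_snd (𝕜 := ℝ))).comp _ (hasFDerivAt_snd (𝕜 := ℝ))
  have hsq : HasFDerivAt (fun p : ℝ × ℝ × ℝ × ℝ =>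
      Real.sqrt (p.2.2.1 ^ 2 + p.2.2.2 ^ 2)) _ (x, y, u, v) :=
    (Real.hasDerivAt_sqrt hs).comp_hasFDerivAt (x, y, u, v)
      (by have h := ((hasDerivAt_pow 2 u).comp_hasFDerivAt _ hU).add ((hasDerivAt_pow 2 v).comp_hasFDerivAt _ hV); exact h)
  have hN : HasFDerivAt (fun p : ℝ × ℝ × ℝ × ℝ =>
      Real.sqrt (p.2.2.1 ^ 2 + p.2.2.2 ^ 2) + p.2.1 * p.2.2.1 - p.1 * p.2.2.2) _
      (x, y, u, v) := (hsq.add (hY.mul hU)).sub (hX.mul hV)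
  have hD : HasFDerivAt (fun p : ℝ × ℝ × ℝ × ℝ =>
      2 * (1 - (p.1 ^ 2 + p.2.1 ^ 2))) _ (x, y, u, v) :=
    HasFDerivAt.const_mul (HasFDerivAt.const_sub (by have h := ((hasDerivAt_pow 2 x).comp_hasFDerivAt _ hX).add ((hasDerivAt_pow 2 y).comp_hasFDerivAt _ hY); exact h) 1) 2
  have hDinv : HasFDerivAt (fun p : ℝ × ℝ × ℝ × ℝ =>
      (2 * (1 - (p.1 ^ 2 + p.2.1 ^ 2)))⁻¹) _ (x, y, u, v) :=
    (hasDerivAt_inv hDne).comp_hasFDerivAt (x, y, u, v) hD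
  have heq : Fhoro =ᶠ[nhds ((x, y, u, v) : ℝ × ℝ × ℝ × ℝ)]
      (fun p : ℝ × ℝ × ℝ × ℝ =>
        (Real.sqrt (p.2.2.1 ^ 2 + p.2.2.2 ^ 2) + p.2.1 * p.2.2.1 - p.1 * p.2.2.2) *
          (2 * (1 - (p.1 ^ 2 + p.2.1 ^ 2)))⁻¹) :=
    Filter.Eventually.of_forall fun p => by simp [Fhoro, div_eq_mul_inv]
  have hF := (hN.mul hDinv).congr_of_eventuallyEq heq
  rw [hF.fderiv]
  have hr : Real.sqrt (u ^ 2 + v ^ 2) ^ 2 = u ^ 2 + v ^ 2 :=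
    Real.sq_sqrt (by positivity)
  have hrne : Real.sqrt (u ^ 2 + v ^ 2) ≠ 0 := by
    intro h
    rw [h] at hr
    exact hs (by linarith [hr])
  simp only [Fhoro, ContinuousLinearMap.smul_apply, ContinuousLinearMap.sub_apply,
    ContinuousLinearMap.add_apply, ContinuousLinearMap.comp_apply,
    ContinuousLinearMap.coe_fst', ContinuousLinearMap.coe_snd',
    ContinuousLinearMap.smulRight_apply, ContinuousLinearMap.one_apply,
    smul_eq_mul, ContinuousLinearMap.neg_apply]
  set r := Real.sqrt (u ^ 2 + v ^ 2)
  have hD1 : 1 - (x ^ 2 + y ^ 2) ≠ 0 := by nlinarith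
  field_simp
  ring_nf
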